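/- Let A1, A2 ∈ ℝ³ with |A1| ≤ ε and |A2| ≤ ε for some 0 < ε ≤ 1/2, and define R_A v = √(1−|A|²) v + A × v on ℝ³. Then the operator norm of R_{A1} − R_{A2} is at most 2·|A1 − A2|. -/

import Mathlib

/-!
`R_{A1} v - R_{A2} v = (√(1 - |A1|²) - √(1 - |A2|²)) v + (A1 - A2) × v`. The cross product term
has norm at most `|A1 - A2| |v|`, and so does the scalar term, because `x ↦ √(1 - x²)` is
`1`-Lipschitz on `[0, 1/√2]` and `||A1| - |A2|| ≤ |A1 - A2|`.
-/

noncomputable def cross (a b : EuclideanSpace ℝ (Fin 3)) : EuclideanSpace ℝ (Fin 3) :=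
  (WithLp.equiv 2 (Fin 3 → ℝ)).symm
    ![a 1 * b 2 - a 2 * b 1, a 2 * b 0 - a 0 * b 2, a 0 * b 1 - a 1 * b 0]

/-- `R_A v = √(1−|A|²) v + A × v`. -/
noncomputable def RA (A v : EuclideanSpace ℝ (Fin 3)) : EuclideanSpace ℝ (Fin 3) :=
  Real.sqrt (1 - ‖A‖ ^ 2) • v + cross A v

open scoped Matrix
open WithLp

lemma cross_eq_toLp_crossProduct (a b : EuclideanSpace ℝ (Fin 3)) :
    cross a b = toLp 2 (ofLp a ⨯₃ ofLp b) :=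
  rfl

lemma norm_cross_le (a b : EuclideanSpace ℝ (Fin 3)) : ‖cross a b‖ ≤ ‖a‖ * ‖b‖ := by
  rw [cross_eq_toLp_crossProduct, InnerProductGeometry.norm_ofLp_crossProduct]
  exact mul_le_of_le_one_right (by positivity) (Real.sin_le_one _)

lemma cross_sub_left (a b v : EuclideanSpace ℝ (Fin 3)) :
    cross (a - b) v = cross a v - cross b v := by
  simp only [cross_eq_toLp_crossProduct, ofLp_sub, map_sub, LinearMap.sub_apply, toLp_sub]

lemma abs_sqrt_one_sub_sq_sub_le {a b : ℝ} (ha : 0 ≤ a) (hb : 0 ≤ b)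
    (ha' : a ^ 2 ≤ 1 / 2) (hb' : b ^ 2 ≤ 1 / 2) :
    |√(1 - a ^ 2) - √(1 - b ^ 2)| ≤ |a - b| := by
  set s := √(1 - a ^ 2)
  set t := √(1 - b ^ 2)
  have has : a ≤ s := Real.le_sqrt_of_sq_le (by linarith)
  have hbt : b ≤ t := Real.le_sqrt_of_sq_le (by linarith)
  have hst : 0 < s + t := add_pos_of_pos_of_nonneg (Real.sqrt_pos.2 (by linarith)) (by positivity)
  have hdiff : (s - t) * (s + t) = (b - a) * (b + a) := by
    linear_combination Real.sq_sqrt (by linarith : (0 : ℝ) ≤ 1 - a ^ 2)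
      - Real.sq_sqrt (by linarith : (0 : ℝ) ≤ 1 - b ^ 2)
  refine le_of_mul_le_mul_right ?_ hst
  calc |s - t| * (s + t) = |a - b| * (a + b) := by
        rw [← abs_of_pos hst, ← abs_mul, hdiff, abs_mul, abs_sub_comm b a,
          abs_of_nonneg (by positivity : 0 ≤ b + a), add_comm b a]
    _ ≤ |a - b| * (s + t) := by gcongr

lemma RA_sub_RA (A B v : EuclideanSpace ℝ (Fin 3)) :
    RA A v - RA B v = (√(1 - ‖A‖ ^ 2) - √(1 - ‖B‖ ^ 2)) • v + cross (A - B) v := by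
  rw [RA, RA, sub_smul, cross_sub_left]
  abel

theorem RA_diff_opNorm_le_general (ε : ℝ) (hε' : ε ≤ 1 / 2)
    (A1 A2 : EuclideanSpace ℝ (Fin 3)) (hA1 : ‖A1‖ ≤ ε) (hA2 : ‖A2‖ ≤ ε) :
    ∀ v : EuclideanSpace ℝ (Fin 3), ‖RA A1 v - RA A2 v‖ ≤ 2 * ‖A1 - A2‖ * ‖v‖ := by
  intro v
  have hsq : ∀ x : ℝ, 0 ≤ x → x ≤ 1 / 2 → x ^ 2 ≤ 1 / 2 := fun x h0 h1 => by nlinarith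
  have hsqrt : |√(1 - ‖A1‖ ^ 2) - √(1 - ‖A2‖ ^ 2)| ≤ ‖A1 - A2‖ :=
    (abs_sqrt_one_sub_sq_sub_le (norm_nonneg _) (norm_nonneg _)
      (hsq _ (norm_nonneg _) (hA1.trans hε')) (hsq _ (norm_nonneg _) (hA2.trans hε'))).trans
      (abs_norm_sub_norm_le A1 A2)
  calc ‖RA A1 v - RA A2 v‖
      ≤ |√(1 - ‖A1‖ ^ 2) - √(1 - ‖A2‖ ^ 2)| * ‖v‖ + ‖A1 - A2‖ * ‖v‖ := by
        rw [RA_sub_RA, ← Real.norm_eq_abs, ← norm_smul]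
        exact norm_add_le_of_le le_rfl (norm_cross_le _ _)
    _ ≤ ‖A1 - A2‖ * ‖v‖ + ‖A1 - A2‖ * ‖v‖ := by gcongr
    _ = 2 * ‖A1 - A2‖ * ‖v‖ := by ring

/-- for `|A1|, |A2| ≤ ε ≤ 1/2`, the operator norm of `R_{A1} − R_{A2}`
is at most `2|A1 − A2|`. -/
theorem RA_diff_opNorm_le (ε : ℝ) (hε : 0 < ε) (hε' : ε ≤ 1 / 2)
    (A1 A2 : EuclideanSpace ℝ (Fin 3)) (hA1 : ‖A1‖ ≤ ε) (hA2 : ‖A2‖ ≤ ε) :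
    ∀ v : EuclideanSpace ℝ (Fin 3), ‖RA A1 v - RA A2 v‖ ≤ 2 * ‖A1 - A2‖ * ‖v‖ :=
  RA_diff_opNorm_le_general ε hε' A1 A2 hA1 hA2
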